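/- Let θ be a polynomial right action of a graded Lie group G on ℝ^d such that the shear map Θ : ℝ^d × G → ℝ^d × ℝ^d, Θ(x,v) = (x, θ_v(x)), is a polynomial diffeomorphism. Then for fixed x, the orbit map v ↦ θ(x,v) from G to ℝ^d is a polynomial diffeomorphism, and the quantity |det D_v(θ(x,·))| is a nonzero constant independent of x and v. -/

import Mathlib

/-!
The inverse of the orbit map `θ x` is `y ↦ (Ω (x, y)).2`, which is polynomial in `y`. Write `θ`
and `Ω₂` as polynomials `P`, `Q` in `(x, v)`. Then `Q (x, P (x, v)) = v` is an identity of
polynomials, and differentiating it in `v` by the chain rule exhibits a polynomial inverse of the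
Jacobian determinant `det ∂ᵥP` in `ℝ[x, v]`. A unit of a polynomial ring over a field is a
nonzero constant.
-/

open MvPolynomial

namespace MvPolynomial

variable {R σ τ : Type*} [CommRing R]

theorem eval_bind₁ (z : τ → R) (q : σ → MvPolynomial τ R) (r : MvPolynomial σ R) :
    eval z (bind₁ q r) = eval (fun s => eval z (q s)) r :=
  eval₂Hom_bind₁ _ _ _ _

theorem pderiv_bind₁ [Fintype σ] (q : σ → MvPolynomial τ R) (r : MvPolynomial σ R) (j : τ) :
    pderiv j (bind₁ q r) = ∑ k, bind₁ q (pderiv k r) * pderiv j (q k) := by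
  classical
  induction r using MvPolynomial.induction_on with
  | C a => simp
  | add p q hp hq => simp [hp, hq, add_mul, Finset.sum_add_distrib]
  | mul_X p i hp =>
    simp [Derivation.leibniz, pderiv_X, hp, Pi.single_apply, add_mul, Finset.sum_add_distrib,
      Finset.mul_sum, mul_assoc, apply_ite (bind₁ q), ite_mul]

theorem pderiv_bind₁_sumElim_C_X (p : MvPolynomial (τ ⊕ σ) R) (x : τ → R) (j : σ) :
    pderiv j (bind₁ (Sum.elim (C ∘ x) X) p) =
      bind₁ (Sum.elim (C ∘ x) X) (pderiv (Sum.inr j) p) := by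
  classical
  induction p using MvPolynomial.induction_on with
  | C a => simp
  | add p q hp hq => simp [hp, hq]
  | mul_X p q h =>
    simp only [Derivation.leibniz, pderiv_X, smul_eq_mul, map_add, map_mul, bind₁_X_right, h]
    cases q <;> simp [Pi.single_apply]

theorem eval_bind₁_sumElim_C_X (p : MvPolynomial (τ ⊕ σ) R) (x : τ → R) (v : σ → R) :
    eval v (bind₁ (Sum.elim (C ∘ x) X) p) = eval (Sum.elim x v) p := by
  rw [eval_bind₁]; congr 2; funext s; cases s <;> simp

noncomputable def relJacobian (P : σ → MvPolynomial (τ ⊕ σ) R) :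
    Matrix σ σ (MvPolynomial (τ ⊕ σ) R) :=
  Matrix.of fun i j => pderiv (Sum.inr j) (P i)

-- `hQP` says `Q (x, P (x, v)) = v`, where `x` are the `τ`-variables and `v` the `σ`-variables.
theorem relJacobian_chain [Fintype σ] [Fintype τ] [DecidableEq σ]
    {P Q : σ → MvPolynomial (τ ⊕ σ) R}
    (hQP : ∀ i, bind₁ (Sum.elim (X ∘ Sum.inl) P) (Q i) = X (Sum.inr i)) :
    (relJacobian Q).map (bind₁ (Sum.elim (X ∘ Sum.inl) P)) * relJacobian P = 1 := by
  ext i j : 1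
  classical
  have h := congrArg (pderiv (Sum.inr j)) (hQP i)
  rw [pderiv_bind₁, Fintype.sum_sum_type] at h
  simpa [relJacobian, Matrix.mul_apply, pderiv_X, Pi.single_apply, Matrix.one_apply, eq_comm]
    using h

theorem isUnit_det_relJacobian [Fintype σ] [Fintype τ] [DecidableEq σ]
    {P Q : σ → MvPolynomial (τ ⊕ σ) R}
    (hQP : ∀ i, bind₁ (Sum.elim (X ∘ Sum.inl) P) (Q i) = X (Sum.inr i)) :
    IsUnit (relJacobian P).det := by
  have h := congrArg Matrix.det (relJacobian_chain hQP)
  rw [Matrix.det_mul, Matrix.det_one] at h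
  exact .of_mul_eq_one_right (bind₁ (Sum.elim (X ∘ Sum.inl) P) (relJacobian Q).det)
    (by rwa [AlgHom.map_det])

theorem exists_ne_zero_eq_C_of_isUnit {K : Type*} [Field K] {p : MvPolynomial σ K}
    (hp : IsUnit p) :
    ∃ c, c ≠ 0 ∧ p = C c := by
  obtain ⟨c, hc, rfl⟩ := isUnit_iff_eq_C_of_isReduced.mp hp
  exact ⟨c, hc.ne_zero, rfl⟩

section Calculus

variable {𝕜 : Type*} [NontriviallyNormedField 𝕜] [Fintype σ]

theorem hasFDerivAt_eval (p : MvPolynomial σ 𝕜) (v : σ → 𝕜) :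
    HasFDerivAt (fun w => eval w p)
      (∑ j, eval v (pderiv j p) • (ContinuousLinearMap.proj j : (σ → 𝕜) →L[𝕜] 𝕜)) v := by
  classical
  induction p using MvPolynomial.induction_on with
  | C a =>
    simp only [eval_C]
    refine (hasFDerivAt_const a v).congr_fderiv ?_
    ext w
    simp
  | add p q hp hq =>
    simp only [map_add]
    refine (hp.add hq).congr_fderiv ?_
    ext w
    simp [Finset.sum_add_distrib, add_mul]
  | mul_X p i hp =>
    simp only [map_mul, eval_X]
    refine (hp.fun_mul (hasFDerivAt_apply i v)).congr_fderiv ?_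
    ext w
    simp [pderiv_X, Pi.single_apply, add_mul, Finset.sum_add_distrib, Finset.mul_sum,
      apply_ite (eval v), ite_mul, mul_assoc]

theorem fderiv_eval_apply_single [DecidableEq σ] (p : MvPolynomial σ 𝕜) (v : σ → 𝕜) (j : σ) :
    fderiv 𝕜 (fun w => eval w p) v (Pi.single j 1) = eval v (pderiv j p) := by
  simp [(hasFDerivAt_eval p v).fderiv, Pi.single_apply]

theorem fderiv_eval_sumElim_apply_single [DecidableEq σ] (p : MvPolynomial (τ ⊕ σ) 𝕜)
    (x : τ → 𝕜) (v : σ → 𝕜) (j : σ) :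
    fderiv 𝕜 (fun w => eval (Sum.elim x w) p) v (Pi.single j 1) =
      eval (Sum.elim x v) (pderiv (Sum.inr j) p) := by
  simp only [← eval_bind₁_sumElim_C_X, fderiv_eval_apply_single, pderiv_bind₁_sumElim_C_X]

theorem det_fderiv_eval_sumElim [DecidableEq σ] (P : σ → MvPolynomial (τ ⊕ σ) 𝕜) (x : τ → 𝕜)
    (v : σ → 𝕜) :
    (Matrix.of fun i j => fderiv 𝕜 (fun w => eval (Sum.elim x w) (P i)) v (Pi.single j 1)).det =
      eval (Sum.elim x v) (relJacobian P).det := by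
  rw [RingHom.map_det]
  congr 1
  ext i j
  simp [fderiv_eval_sumElim_apply_single, relJacobian]

end Calculus

end MvPolynomial

theorem stmt_12_general (d : ℕ)
    (θ : (Fin d → ℝ) → (Fin d → ℝ) → (Fin d → ℝ))
    (hθpoly : ∀ i : Fin d, ∃ p : MvPolynomial (Fin d ⊕ Fin d) ℝ,
      ∀ x v, θ x v i = eval (Sum.elim x v) p)
    (Ω : ((Fin d → ℝ) × (Fin d → ℝ)) → ((Fin d → ℝ) × (Fin d → ℝ)))
    (hΩpoly₂ : ∀ i : Fin d, ∃ p : MvPolynomial (Fin d ⊕ Fin d) ℝ,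
      ∀ x y, (Ω (x, y)).2 i = eval (Sum.elim x y) p)
    (hΩΘ : ∀ x v, Ω (x, θ x v) = (x, v))
    (hΘΩ : ∀ x y : Fin d → ℝ, ((Ω (x, y)).1, θ (Ω (x, y)).1 (Ω (x, y)).2) = (x, y)) :
    (∀ x : Fin d → ℝ, ∃ ψ : (Fin d → ℝ) → (Fin d → ℝ),
      (∀ i : Fin d, ∃ p : MvPolynomial (Fin d) ℝ, ∀ y, ψ y i = eval y p) ∧
      Function.LeftInverse ψ (θ x) ∧ Function.RightInverse ψ (θ x)) ∧
    ∃ c : ℝ, c ≠ 0 ∧ ∀ (x v : Fin d → ℝ),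
      |Matrix.det (Matrix.of fun i j : Fin d =>
        fderiv ℝ (fun v' => θ x v' i) v (Pi.single j 1))| = c := by
  choose P hP using hθpoly
  choose Q hQ using hΩpoly₂
  have hΩ₁ : ∀ x y, (Ω (x, y)).1 = x := fun x y => congrArg Prod.fst (hΘΩ x y)
  have hQP : ∀ i, bind₁ (Sum.elim (X ∘ Sum.inl) P) (Q i) = X (Sum.inr i) := by
    refine fun i => MvPolynomial.funext fun z => ?_
    have hθz : (fun s => eval z (Sum.elim (X ∘ Sum.inl) P s)) =
        Sum.elim (z ∘ Sum.inl) (θ (z ∘ Sum.inl) (z ∘ Sum.inr)) := by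
      funext s
      cases s <;> simp [hP, Sum.elim_comp_inl_inr]
    rw [eval_bind₁, hθz, ← hQ, hΩΘ, eval_X]
    rfl
  obtain ⟨c, hc, hdet⟩ := exists_ne_zero_eq_C_of_isUnit (isUnit_det_relJacobian hQP)
  refine ⟨fun x => ⟨fun y => (Ω (x, y)).2,
    fun i => ⟨bind₁ (Sum.elim (C ∘ x) X) (Q i), fun y => ?_⟩, fun v => by simp [hΩΘ], fun y => ?_⟩,
    |c|, abs_ne_zero.2 hc, fun x v => ?_⟩
  · rw [eval_bind₁_sumElim_C_X]
    exact hQ i x y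
  · simpa [hΩ₁] using congrArg Prod.snd (hΘΩ x y)
  · simp only [hP, det_fderiv_eval_sumElim, hdet, eval_C]

/-- Let `θ` be a polynomial right action of a graded group `G ≅ ℝ^d` on `ℝ^d`
whose shear map `Θ (x, v) = (x, θ x v)` is a polynomial diffeomorphism (with polynomial
inverse `Ω`). Then every orbit map `v ↦ θ x v` is a polynomial diffeomorphism and
`|det D_v (θ x ·)|` is a nonzero constant independent of `x` and `v`. -/
theorem stmt_12 (d : ℕ)
    (θ : (Fin d → ℝ) → (Fin d → ℝ) → (Fin d → ℝ))
    (hθpoly : ∀ i : Fin d, ∃ p : MvPolynomial (Fin d ⊕ Fin d) ℝ,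
      ∀ x v, θ x v i = eval (Sum.elim x v) p)
    (Ω : ((Fin d → ℝ) × (Fin d → ℝ)) → ((Fin d → ℝ) × (Fin d → ℝ)))
    (hΩpoly₁ : ∀ i : Fin d, ∃ p : MvPolynomial (Fin d ⊕ Fin d) ℝ,
      ∀ x y, (Ω (x, y)).1 i = eval (Sum.elim x y) p)
    (hΩpoly₂ : ∀ i : Fin d, ∃ p : MvPolynomial (Fin d ⊕ Fin d) ℝ,
      ∀ x y, (Ω (x, y)).2 i = eval (Sum.elim x y) p)
    (hΩΘ : ∀ x v, Ω (x, θ x v) = (x, v))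
    (hΘΩ : ∀ x y : Fin d → ℝ, ((Ω (x, y)).1, θ (Ω (x, y)).1 (Ω (x, y)).2) = (x, y)) :
    (∀ x : Fin d → ℝ, ∃ ψ : (Fin d → ℝ) → (Fin d → ℝ),
      (∀ i : Fin d, ∃ p : MvPolynomial (Fin d) ℝ, ∀ y, ψ y i = eval y p) ∧
      Function.LeftInverse ψ (θ x) ∧ Function.RightInverse ψ (θ x)) ∧
    ∃ c : ℝ, c ≠ 0 ∧ ∀ (x v : Fin d → ℝ),
      |Matrix.det (Matrix.of fun i j : Fin d =>
        fderiv ℝ (fun v' => θ x v' i) v (Pi.single j 1))| = c :=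
  stmt_12_general d θ hθpoly Ω hΩpoly₂ hΩΘ hΘΩ
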